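/- If H is a contraction minor of a finite simple graph G (i.e., H is obtained from G by a sequence of edge contractions), then θ(H) ≤ θ(G), where θ(G) := θ(Ind(G)) is the theta-number of the independence complex of G. -/

import Mathlib

namespace ThetaPaper

variable {α : Type*} [DecidableEq α]

def delF (X : Finset (Finset α)) (v : α) : Finset (Finset α) :=
  X.filter fun S => v ∉ S

def lkF (X : Finset (Finset α)) (v : α) : Finset (Finset α) :=
  X.filter fun T => v ∉ T ∧ insert v T ∈ X

def vertF (X : Finset (Finset α)) : Finset α := X.biUnion id

def nonConeF (X : Finset (Finset α)) : Finset α :=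
  (vertF X).filter fun v => delF X v ≠ lkF X v

lemma delF_card_lt {X : Finset (Finset α)} {v : α} (h : v ∈ nonConeF X) :
    (delF X v).card < X.card := by
  obtain ⟨A, hA, hvA⟩ := Finset.mem_biUnion.mp (Finset.mem_filter.mp h).1
  refine Finset.card_lt_card ⟨Finset.filter_subset _ _, fun hsub => ?_⟩
  have h2 := hsub hA
  rw [delF, Finset.mem_filter] at h2
  exact h2.2 hvA

lemma lkF_card_lt {X : Finset (Finset α)} {v : α} (h : v ∈ nonConeF X) :
    (lkF X v).card < X.card := by
  obtain ⟨A, hA, hvA⟩ := Finset.mem_biUnion.mp (Finset.mem_filter.mp h).1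
  refine Finset.card_lt_card ⟨Finset.filter_subset _ _, fun hsub => ?_⟩
  have h2 := hsub hA
  rw [lkF, Finset.mem_filter] at h2
  exact h2.2.1 hvA

def theta (X : Finset (Finset α)) : ℕ :=
  if h : (nonConeF X).Nonempty then
    (nonConeF X).attach.inf' (Finset.attach_nonempty_iff.mpr h) fun v =>
      max (theta (delF X v.1)) (theta (lkF X v.1) + 1)
  else 0
termination_by X.card
decreasing_by
  · exact delF_card_lt v.2
  · exact lkF_card_lt v.2

def IsComplex (X : Finset (Finset α)) : Prop :=
  ∀ A ∈ X, ∀ B, B ⊆ A → B ∈ X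

/-- `dim(X)`, as an integer: the maximum of `|A| - 1` over faces `A ∈ X`. -/
noncomputable def dimZ (X : Finset (Finset α)) : ℤ :=
  sSup {d : ℤ | ∃ A ∈ X, d = (A.card : ℤ) - 1}

/-- A circuit (minimal non-face) of `X`. -/
def IsCircuit (X : Finset (Finset α)) (S : Finset α) : Prop :=
  S ∉ X ∧ ∀ T ⊂ S, T ∈ X

/-- A circuit cover of `X`. -/
def IsCircuitCover (X : Finset (Finset α)) (C : Finset α) : Prop :=
  ∀ S : Finset α, IsCircuit X S → (S.card : ℤ) - 1 ≤ ((S ∩ C).card : ℤ)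

/-- The circuit cover number `ccn(X)` of a complex with vertex set `V`. -/
noncomputable def ccnZ (V : Finset α) (X : Finset (Finset α)) : ℤ :=
  sInf {k : ℤ | ∃ C ⊆ V, IsCircuitCover X C ∧
    k = dimZ (X.filter fun A => A ⊆ C) + 1}

/-- The simplicial join. -/
def joinF (X₁ X₂ : Finset (Finset α)) : Finset (Finset α) :=
  X₁.biUnion fun A => X₂.image fun B => A ∪ B

/-- A facet (maximal face) of `X`. -/
def IsFacet (X : Finset (Finset α)) (B : Finset α) : Prop :=
  B ∈ X ∧ ∀ C ∈ X, B ⊆ C → C = B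

/-- An elementary `k`-collapse: remove the interval `[A, B]` where `A` is a face of size
at most `k` contained in the unique facet `B`. -/
def ElemCollapse (k : ℕ) (X Y : Finset (Finset α)) : Prop :=
  ∃ A B : Finset α, A ∈ X ∧ A.card ≤ k ∧ IsFacet X B ∧ A ⊆ B ∧
    (∀ C, IsFacet X C → A ⊆ C → C = B) ∧
    Y = X.filter fun C => ¬ (A ⊆ C ∧ C ⊆ B)

/-- `X` is `k`-collapsible: it reduces to the void complex by elementary `k`-collapses. -/
def Collapsible (k : ℕ) (X : Finset (Finset α)) : Prop :=
  Relation.ReflTransGen (ElemCollapse k) X ∅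

/-- The collapsibility number `C(X)`. -/
noncomputable def collapseNum (X : Finset (Finset α)) : ℕ :=
  sInf {k : ℕ | Collapsible k X}

/-- `k(X)`: the maximum size of a set `{x₁, …, x_k}` of vertices of `X` admitting facets
`A₁, …, A_{k+1}` with `x_i ∉ A_i` and `x_i ∈ A_j` for `i < j`. -/
noncomputable def kNum (X : Finset (Finset α)) : ℕ :=
  sSup {k : ℕ | ∃ (x : Fin k → α) (A : Fin (k + 1) → Finset α),
    Function.Injective x ∧ (∀ i, {x i} ∈ X) ∧ (∀ j, IsFacet X (A j)) ∧
    (∀ i : Fin k, x i ∉ A i.castSucc) ∧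
    (∀ (i : Fin k) (j : Fin (k + 1)), (i : ℕ) < (j : ℕ) → x i ∈ A j)}

/-- Vertex decomposable simplicial complexes. -/
inductive VertexDecomposable : Finset (Finset α) → Prop
  | simplex (S : Finset α) : VertexDecomposable S.powerset
  | shed (X : Finset (Finset α)) (v : α) (hv : {v} ∈ X)
      (hdel : VertexDecomposable (delF X v)) (hlk : VertexDecomposable (lkF X v))
      (hfacet : ∀ B, IsFacet (delF X v) B → IsFacet X B) : VertexDecomposable X

section Graphs

variable {V : Type*} [Fintype V] [DecidableEq V]

open Classical in
/-- The independence complex of a graph, as a `Finset` of faces. -/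
noncomputable def indComplex (G : SimpleGraph V) : Finset (Finset V) :=
  Finset.univ.powerset.filter fun A => ∀ x ∈ A, ∀ y ∈ A, ¬ G.Adj x y

/-- The theta-number of a graph: the theta-number of its independence complex. -/
noncomputable def thetaG (G : SimpleGraph V) : ℕ := theta (indComplex G)

/-- A graph is chordal if it has no induced cycle of length greater than `3`. -/
def Chordal {W : Type*} (G : SimpleGraph W) : Prop :=
  ∀ n : ℕ, 3 < n → IsEmpty (SimpleGraph.cycleGraph n ↪g G)

/-- Contraction of the edge `xy`: the merged vertex is `x`, and `y` becomes isolated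
(isolated vertices are irrelevant for the independence complex/theta-number). -/
def contractEdge (G : SimpleGraph V) (x y : V) : SimpleGraph V where
  Adj a b := a ≠ b ∧ a ≠ y ∧ b ≠ y ∧
    ((a = x ∧ (G.Adj x b ∨ G.Adj y b)) ∨
     (b = x ∧ (G.Adj a x ∨ G.Adj a y)) ∨
     (a ≠ x ∧ b ≠ x ∧ G.Adj a b))
  symm := by
    constructor
    rintro a b ⟨hab, hay, hby, h⟩
    refine ⟨Ne.symm hab, hby, hay, ?_⟩
    rcases h with ⟨ha, h⟩ | ⟨hb, h⟩ | ⟨ha, hb, h⟩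
    · exact Or.inr (Or.inl ⟨ha, h.imp (fun t => t.symm) (fun t => t.symm)⟩)
    · exact Or.inl ⟨hb, h.imp (fun t => t.symm) (fun t => t.symm)⟩
    · exact Or.inr (Or.inr ⟨hb, ha, h.symm⟩)
  loopless := by constructor; rintro a ⟨h, -⟩; exact h rfl

/-- One edge-contraction step: `H` is obtained from `G` by contracting an edge of `G`. -/
def ContractionStep (G H : SimpleGraph V) : Prop :=
  ∃ x y, G.Adj x y ∧ H = contractEdge G x y

/-- A matching of `G` (a set of pairwise disjoint edges). -/
def IsMatching (G : SimpleGraph V) (M : Finset (Sym2 V)) : Prop :=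
  (∀ e ∈ M, e ∈ G.edgeSet) ∧
    ∀ e ∈ M, ∀ f ∈ M, e ≠ f → ∀ x, x ∈ e → x ∉ f

/-- An induced matching of `G`: a matching such that no two vertices belonging to
different edges of it are adjacent. -/
def IsInducedMatching (G : SimpleGraph V) (M : Finset (Sym2 V)) : Prop :=
  IsMatching G M ∧ ∀ e ∈ M, ∀ f ∈ M, e ≠ f → ∀ x ∈ e, ∀ y ∈ f, ¬ G.Adj x y

/-- The induced matching number `im(G)`. -/
noncomputable def inducedMatchingNum (G : SimpleGraph V) : ℕ :=
  sSup {k : ℕ | ∃ M, IsInducedMatching G M ∧ M.card = k}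

/-- A maximal matching. -/
def IsMaximalMatching (G : SimpleGraph V) (M : Finset (Sym2 V)) : Prop :=
  IsMatching G M ∧ ∀ N, IsMatching G N → M ⊆ N → N = M

/-- `min-m(G)`: the minimum size of a maximal matching. -/
noncomputable def minMaximalMatchingNum (G : SimpleGraph V) : ℕ :=
  sInf {k : ℕ | ∃ M, IsMaximalMatching G M ∧ M.card = k}

/-- Independent (stable) sets of a graph. -/
def IsIndepSet (G : SimpleGraph V) (A : Finset V) : Prop :=
  ∀ x ∈ A, ∀ y ∈ A, ¬ G.Adj x y

/-- A vertex cover. -/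
def IsVertexCover (G : SimpleGraph V) (C : Finset V) : Prop :=
  ∀ x y, G.Adj x y → x ∈ C ∨ y ∈ C

/-- `α(G[F])`: the maximum size of an independent set of `G` contained in `F`. -/
noncomputable def indepNumOn (G : SimpleGraph V) (F : Finset V) : ℕ :=
  sSup {k : ℕ | ∃ A ⊆ F, IsIndepSet G A ∧ A.card = k}

/-- The circuit cover number of a graph: `ccn(G) = min{α(G[F]) : F a vertex cover}`. -/
noncomputable def ccnG (G : SimpleGraph V) : ℕ :=
  sInf {k : ℕ | ∃ F, IsVertexCover G F ∧ k = indepNumOn G F}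

open Classical in
/-- The closed neighborhood of a vertex, as a `Finset`. -/
noncomputable def closedNbhd (G : SimpleGraph V) (x : V) : Finset V :=
  Finset.univ.filter fun z => z = x ∨ G.Adj x z

/-- The maximum privacy degree `Γ(G) = max{|N[x] \ N[y]| : xy ∈ E(G)}`. -/
noncomputable def privacyDeg (G : SimpleGraph V) : ℕ :=
  sSup {k : ℕ | ∃ x y, G.Adj x y ∧ k = (closedNbhd G x \ closedNbhd G y).card}

open Classical in
/-- The maximum degree `Δ(G)`. -/
noncomputable def maxDeg (G : SimpleGraph V) : ℕ :=
  sSup {k : ℕ | ∃ v, k = (Finset.univ.filter fun z => G.Adj v z).card}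

end Graphs

open Classical in
/-- `V(M)`: the set of vertices incident to the edges of `M`. -/
noncomputable def matchVerts {V : Type*} [Fintype V] (M : Finset (Sym2 V)) : Finset V :=
  Finset.univ.filter fun x => ∃ e ∈ M, x ∈ e

variable {X : Finset (Finset α)}

/-! For a vertex set `W`, write `θ_G(W)` for the theta-number of the independence complex of
`G[W]`. By induction on `|W|`, `θ_G(W)` is monotone in `W` and does not change when an isolated
vertex is removed. In `G' = G/xy` the vertex `y` is isolated and `G'` agrees with `G` off `{x, y}`,
so `θ_{G'}(S) = θ_G(S \ {y})` whenever `x ∉ S`. Now let `v` realise the minimum defining `θ_G(W)`.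
If `v ∈ {x, y}`, branch on the merged vertex `x` in `G'`: both of its branches avoid `x` and,
after removing `y`, sit inside the corresponding branches at `v` in `G`. Otherwise branch on `v`
itself in `G'` and conclude by induction, or by the previous remark when `v` is adjacent to `x`
in `G'`. -/

section Complex

lemma theta_eq_zero (h : nonConeF X = ∅) : theta X = 0 := by
  rw [theta, dif_neg (Finset.not_nonempty_iff_eq_empty.mpr h)]

lemma theta_le_max {v : α} (hv : v ∈ nonConeF X) :
    theta X ≤ max (theta (delF X v)) (theta (lkF X v) + 1) := by
  rw [theta, dif_pos ⟨v, hv⟩]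
  exact Finset.inf'_le _ (Finset.mem_attach _ ⟨v, hv⟩)

lemma exists_theta_eq_max (h : (nonConeF X).Nonempty) :
    ∃ v ∈ nonConeF X, theta X = max (theta (delF X v)) (theta (lkF X v) + 1) := by
  rw [theta, dif_pos h]
  obtain ⟨⟨v, hv⟩, -, hmin⟩ := Finset.exists_mem_eq_inf' (Finset.attach_nonempty_iff.mpr h)
    fun v : nonConeF X => max (theta (delF X v)) (theta (lkF X v) + 1)
  exact ⟨v, hv, hmin⟩

lemma theta_congr {Y : Finset (Finset α)} (hXY : nonConeF X = nonConeF Y)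
    (hdel : ∀ v ∈ nonConeF X, theta (delF X v) = theta (delF Y v))
    (hlk : ∀ v ∈ nonConeF X, theta (lkF X v) = theta (lkF Y v)) :
    theta X = theta Y := by
  rcases (nonConeF X).eq_empty_or_nonempty with h | h
  · rw [theta_eq_zero h, theta_eq_zero (hXY ▸ h)]
  apply le_antisymm
  · obtain ⟨v, hv, hY⟩ := exists_theta_eq_max (hXY ▸ h)
    rw [hY, ← hdel v (hXY ▸ hv), ← hlk v (hXY ▸ hv)]
    exact theta_le_max (hXY ▸ hv)
  · obtain ⟨v, hv, hX⟩ := exists_theta_eq_max h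
    rw [hX, hdel v hv, hlk v hv]
    exact theta_le_max (hXY ▸ hv)

end Complex

section IndependenceComplex

variable {V : Type*} {G : SimpleGraph V} {W : Finset V} {v : V}

open Classical in
noncomputable def indOn (G : SimpleGraph V) (W : Finset V) : Finset (Finset V) :=
  W.powerset.filter (IsIndepSet G)

lemma mem_indOn {A : Finset V} : A ∈ indOn G W ↔ A ⊆ W ∧ IsIndepSet G A := by
  classical
  simp [indOn]

lemma indOn_congr {G' : SimpleGraph V} (h : ∀ a ∈ W, ∀ b ∈ W, G.Adj a b ↔ G'.Adj a b) :
    indOn G W = indOn G' W := by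
  ext A
  simp only [mem_indOn, IsIndepSet]
  exact and_congr_right fun hAW =>
    forall₂_congr fun a ha => forall₂_congr fun b hb => not_congr (h a (hAW ha) b (hAW hb))

variable [DecidableEq V]

lemma delF_indOn : delF (indOn G W) v = indOn G (W.erase v) := by
  ext A
  simp only [delF, Finset.mem_filter, mem_indOn, Finset.subset_erase]
  tauto

variable [Fintype V]

lemma indComplex_eq_indOn_univ : indComplex G = indOn G Finset.univ := by
  ext A
  classical
  simp [indComplex, mem_indOn, IsIndepSet]

lemma mem_closedNbhd {a : V} : a ∈ closedNbhd G v ↔ a = v ∨ G.Adj v a := by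
  classical
  simp [closedNbhd]

lemma card_sdiff_closedNbhd_lt (hv : v ∈ W) : (W \ closedNbhd G v).card < W.card :=
  Finset.card_lt_card ⟨Finset.sdiff_subset,
    fun h => (Finset.mem_sdiff.mp (h hv)).2 (mem_closedNbhd.mpr (Or.inl rfl))⟩

lemma lkF_indOn (hv : v ∈ W) : lkF (indOn G W) v = indOn G (W \ closedNbhd G v) := by
  ext A
  simp only [lkF, Finset.mem_filter, mem_indOn, Finset.subset_sdiff, Finset.disjoint_left,
    mem_closedNbhd, not_or, Finset.insert_subset_iff, IsIndepSet, Finset.mem_insert,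
    forall_eq_or_imp]
  constructor
  · rintro ⟨⟨hAW, hA⟩, hvA, -, ⟨-, hvA'⟩, -⟩
    exact ⟨⟨hAW, fun a ha => ⟨fun h => hvA (h ▸ ha), hvA' a ha⟩⟩, hA⟩
  · rintro ⟨⟨hAW, hAv⟩, hA⟩
    exact ⟨⟨hAW, hA⟩, fun hvA => (hAv hvA).1 rfl, ⟨hv, hAW⟩, ⟨G.irrefl, fun a ha => (hAv ha).2⟩,
      fun a ha => ⟨fun h => (hAv ha).2 h.symm, hA a ha⟩⟩

lemma mem_nonConeF_indOn : v ∈ nonConeF (indOn G W) ↔ v ∈ W ∧ ∃ u ∈ W, G.Adj v u := by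
  have hvert : v ∈ vertF (indOn G W) ↔ v ∈ W := by
    refine ⟨fun h => ?_, fun hv => Finset.mem_biUnion.mpr ⟨{v}, ?_, Finset.mem_singleton_self v⟩⟩
    · obtain ⟨A, hA, hvA⟩ := Finset.mem_biUnion.mp h
      exact (mem_indOn.mp hA).1 hvA
    · refine mem_indOn.mpr ⟨Finset.singleton_subset_iff.mpr hv, ?_⟩
      simp [IsIndepSet]
  simp only [nonConeF, Finset.mem_filter, hvert]
  refine and_congr_right fun hv => ?_
  rw [delF_indOn, lkF_indOn hv]
  constructor
  · intro hne
    by_contra! hiso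
    refine hne (congrArg _ (Finset.ext fun a => ?_))
    simp only [Finset.mem_erase, Finset.mem_sdiff, mem_closedNbhd]
    exact ⟨fun ⟨hav, ha⟩ => ⟨ha, not_or.mpr ⟨hav, hiso a ha⟩⟩,
      fun ⟨ha, hav⟩ => ⟨fun h => hav (Or.inl h), ha⟩⟩
  · rintro ⟨u, hu, hvu⟩ heq
    have hu' : {u} ∈ indOn G (W.erase v) :=
      mem_indOn.mpr ⟨by simp [hu, hvu.ne'], by simp [IsIndepSet]⟩
    rw [heq, mem_indOn, Finset.singleton_subset_iff, Finset.mem_sdiff, mem_closedNbhd] at hu'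
    exact hu'.1.2 (Or.inr hvu)

end IndependenceComplex

section ThetaOn

variable {V : Type*} [Fintype V] [DecidableEq V] (G : SimpleGraph V)

noncomputable def thetaOn (W : Finset V) : ℕ := theta (indOn G W)

variable {G}

lemma thetaOn_eq_zero {W : Finset V} (h : ∀ a ∈ W, ∀ b ∈ W, ¬ G.Adj a b) : thetaOn G W = 0 :=
  theta_eq_zero (Finset.eq_empty_of_forall_notMem fun v hv =>
    let ⟨hvW, u, hu, hvu⟩ := mem_nonConeF_indOn.mp hv
    h v hvW u hu hvu)

lemma exists_thetaOn_eq_max {W : Finset V} {a b : V} (ha : a ∈ W) (hb : b ∈ W) (hab : G.Adj a b) :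
    ∃ v ∈ W, thetaOn G W =
      max (thetaOn G (W.erase v)) (thetaOn G (W \ closedNbhd G v) + 1) := by
  obtain ⟨v, hv, heq⟩ := exists_theta_eq_max ⟨a, mem_nonConeF_indOn.mpr ⟨ha, b, hb, hab⟩⟩
  have hvW := (mem_nonConeF_indOn.mp hv).1
  exact ⟨v, hvW, by rw [thetaOn, heq, delF_indOn, lkF_indOn hvW, thetaOn, thetaOn]⟩

/-- An isolated vertex is a cone point of the independence complex. -/
lemma thetaOn_erase_of_isolated {W : Finset V} {v : V} (hv : ∀ u ∈ W, ¬ G.Adj v u) :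
    thetaOn G (W.erase v) = thetaOn G W := by
  have hnonCone : nonConeF (indOn G (W.erase v)) = nonConeF (indOn G W) := by
    ext a
    simp only [mem_nonConeF_indOn, Finset.mem_erase]
    constructor
    · rintro ⟨⟨-, ha⟩, u, ⟨-, hu⟩, hau⟩
      exact ⟨ha, u, hu, hau⟩
    · rintro ⟨ha, u, hu, hau⟩
      exact ⟨⟨fun hav => hv u hu (hav ▸ hau), ha⟩, u,
        ⟨fun huv => hv a ha (huv ▸ hau.symm), hu⟩, hau⟩
  refine theta_congr hnonCone (fun a ha => ?_) (fun a ha => ?_)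
  · have haW := (mem_nonConeF_indOn.mp (hnonCone ▸ ha)).1
    rw [delF_indOn, delF_indOn, Finset.erase_right_comm]
    exact thetaOn_erase_of_isolated fun u hu => hv u (Finset.mem_of_mem_erase hu)
  · obtain ⟨haW', -⟩ := mem_nonConeF_indOn.mp ha
    have haW := (mem_nonConeF_indOn.mp (hnonCone ▸ ha)).1
    rw [lkF_indOn haW', lkF_indOn haW, Finset.erase_sdiff_comm]
    exact thetaOn_erase_of_isolated fun u hu => hv u (Finset.mem_sdiff.mp hu).1
termination_by W.card
decreasing_by
  · exact Finset.card_erase_lt_of_mem haW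
  · exact card_sdiff_closedNbhd_lt haW

lemma thetaOn_le_max (W : Finset V) (v : V) :
    thetaOn G W ≤ max (thetaOn G (W.erase v)) (thetaOn G (W \ closedNbhd G v) + 1) := by
  by_cases hv : v ∈ nonConeF (indOn G W)
  · have hvW := (mem_nonConeF_indOn.mp hv).1
    simpa only [thetaOn, delF_indOn, lkF_indOn hvW] using theta_le_max hv
  refine le_of_eq_of_le ?_ (le_max_left _ _)
  by_cases hvW : v ∈ W
  · exact (thetaOn_erase_of_isolated fun u hu hvu =>
      hv (mem_nonConeF_indOn.mpr ⟨hvW, u, hu, hvu⟩)).symm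
  · rw [Finset.erase_eq_of_notMem hvW]

lemma thetaOn_mono {W' W : Finset V} (hsub : W' ⊆ W) : thetaOn G W' ≤ thetaOn G W := by
  by_cases hedge : ∃ a ∈ W, ∃ b ∈ W, G.Adj a b
  · obtain ⟨a, ha, b, hb, hab⟩ := hedge
    obtain ⟨v, hvW, heq⟩ := exists_thetaOn_eq_max ha hb hab
    have hdel : W'.erase v ⊆ W.erase v := Finset.erase_subset_erase v hsub
    have hlk : W' \ closedNbhd G v ⊆ W \ closedNbhd G v := Finset.sdiff_subset_sdiff hsub le_rfl
    calc thetaOn G W'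
        ≤ max (thetaOn G (W'.erase v)) (thetaOn G (W' \ closedNbhd G v) + 1) :=
          thetaOn_le_max W' v
      _ ≤ max (thetaOn G (W.erase v)) (thetaOn G (W \ closedNbhd G v) + 1) :=
          max_le_max (thetaOn_mono hdel) (Nat.add_le_add_right (thetaOn_mono hlk) 1)
      _ = thetaOn G W := heq.symm
  · push Not at hedge
    rw [thetaOn_eq_zero fun a ha b hb => hedge a (hsub ha) b (hsub hb)]
    exact Nat.zero_le _
termination_by W.card
decreasing_by
  · exact Finset.card_erase_lt_of_mem hvW
  · exact card_sdiff_closedNbhd_lt hvW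

end ThetaOn

section Contraction

variable {V : Type*} {G : SimpleGraph V} {x y : V}

lemma not_contractEdge_adj_right {a : V} : ¬ (contractEdge G x y).Adj a y := fun h => h.2.2.1 rfl

lemma contractEdge_adj_iff_of_ne {a b : V} (hax : a ≠ x) (hay : a ≠ y) (hbx : b ≠ x)
    (hby : b ≠ y) : (contractEdge G x y).Adj a b ↔ G.Adj a b := by
  refine ⟨fun ⟨_, _, _, h⟩ => ?_, fun h => ⟨h.ne, hay, hby, Or.inr (Or.inr ⟨hax, hbx, h⟩)⟩⟩
  rcases h with ⟨rfl, -⟩ | ⟨rfl, -⟩ | ⟨-, -, h⟩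
  exacts [absurd rfl hax, absurd rfl hbx, h]

lemma contractEdge_adj_left_iff (hxy : x ≠ y) {a : V} :
    (contractEdge G x y).Adj a x ↔ a ≠ x ∧ a ≠ y ∧ (G.Adj a x ∨ G.Adj a y) := by
  refine ⟨fun ⟨hax, hay, _, h⟩ => ⟨hax, hay, ?_⟩,
    fun ⟨hax, hay, h⟩ => ⟨hax, hay, hxy, Or.inr (Or.inl ⟨rfl, h⟩)⟩⟩
  rcases h with ⟨rfl, -⟩ | ⟨-, h⟩ | ⟨-, hxx, -⟩
  exacts [absurd rfl hax, h, absurd rfl hxx]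

variable [Fintype V] [DecidableEq V]

lemma closedNbhd_subset_insert_closedNbhd_contractEdge (hxy : x ≠ y) {v : V} (hvy : v ≠ y) :
    closedNbhd G v ⊆ insert y (closedNbhd (contractEdge G x y) v) := by
  intro a ha
  rw [Finset.mem_insert, mem_closedNbhd]
  rcases mem_closedNbhd.mp ha with rfl | hva
  · exact Or.inr (Or.inl rfl)
  by_cases hay : a = y
  · exact Or.inl hay
  refine Or.inr (Or.inr ?_)
  by_cases hax : a = x
  · subst hax
    exact (contractEdge_adj_left_iff hxy).mpr ⟨hva.ne, hvy, Or.inl hva⟩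
  by_cases hvx : v = x
  · subst hvx
    exact ((contractEdge_adj_left_iff hxy).mpr ⟨hax, hay, Or.inl hva.symm⟩).symm
  exact (contractEdge_adj_iff_of_ne hvx hvy hax hay).mpr hva

lemma closedNbhd_right_subset_insert_closedNbhd_contractEdge (hxy : x ≠ y) :
    closedNbhd G y ⊆ insert y (closedNbhd (contractEdge G x y) x) := by
  intro a ha
  rw [Finset.mem_insert, mem_closedNbhd]
  rcases mem_closedNbhd.mp ha with rfl | hya
  · exact Or.inl rfl
  by_cases hax : a = x
  · exact Or.inr (Or.inl hax)
  exact Or.inr (Or.inr ((contractEdge_adj_left_iff hxy).mpr ⟨hax, hya.ne', Or.inr hya.symm⟩).symm)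

lemma thetaOn_contractEdge_of_notMem {S : Finset V} (hx : x ∉ S) :
    thetaOn (contractEdge G x y) S = thetaOn G (S.erase y) := by
  rw [← thetaOn_erase_of_isolated fun u _ h => not_contractEdge_adj_right h.symm, thetaOn, thetaOn,
    indOn_congr]
  intro a ha b hb
  have hne : ∀ c ∈ S.erase y, c ≠ x ∧ c ≠ y := fun c hc =>
    ⟨fun hcx => hx (hcx ▸ Finset.mem_of_mem_erase hc), Finset.ne_of_mem_erase hc⟩
  exact contractEdge_adj_iff_of_ne (hne a ha).1 (hne a ha).2 (hne b hb).1 (hne b hb).2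

lemma thetaOn_contractEdge_le_max_of_mem_edge (hxy : G.Adj x y) {v : V} (hv : v = x ∨ v = y)
    (W : Finset V) : thetaOn (contractEdge G x y) W ≤
      max (thetaOn G (W.erase v)) (thetaOn G (W \ closedNbhd G v) + 1) := by
  set G' := contractEdge G x y
  have hxN : x ∉ W \ closedNbhd G' x := fun h =>
    (Finset.mem_sdiff.mp h).2 (mem_closedNbhd.mpr (Or.inl rfl))
  have hdel : (W.erase x).erase y ⊆ W.erase v := by
    rcases hv with rfl | rfl
    exacts [Finset.erase_subset _ _, Finset.erase_right_comm (s := W) ▸ Finset.erase_subset _ _]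
  have hlk : closedNbhd G v ⊆ insert y (closedNbhd G' x) := by
    rcases hv with rfl | rfl
    exacts [closedNbhd_subset_insert_closedNbhd_contractEdge hxy.ne hxy.ne,
      closedNbhd_right_subset_insert_closedNbhd_contractEdge hxy.ne]
  calc thetaOn G' W
      ≤ max (thetaOn G' (W.erase x)) (thetaOn G' (W \ closedNbhd G' x) + 1) :=
        thetaOn_le_max W x
    _ = max (thetaOn G ((W.erase x).erase y))
          (thetaOn G (W \ insert y (closedNbhd G' x)) + 1) := by
        rw [thetaOn_contractEdge_of_notMem (Finset.notMem_erase x W),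
          thetaOn_contractEdge_of_notMem hxN, Finset.sdiff_insert]
    _ ≤ _ := max_le_max (thetaOn_mono hdel)
        (Nat.add_le_add_right (thetaOn_mono (Finset.sdiff_subset_sdiff le_rfl hlk)) 1)

lemma thetaOn_contractEdge_le (hxy : G.Adj x y) {W : Finset V} (hx : x ∈ W) (hy : y ∈ W) :
    thetaOn (contractEdge G x y) W ≤ thetaOn G W := by
  set G' := contractEdge G x y
  obtain ⟨v, hvW, heq⟩ := exists_thetaOn_eq_max hx hy hxy
  rw [heq]
  by_cases hv : v = x ∨ v = y
  · exact thetaOn_contractEdge_le_max_of_mem_edge hxy hv W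
  push Not at hv
  obtain ⟨hvx, hvy⟩ := hv
  refine (thetaOn_le_max W v).trans (max_le_max (thetaOn_contractEdge_le hxy
    (Finset.mem_erase.mpr ⟨Ne.symm hvx, hx⟩) (Finset.mem_erase.mpr ⟨Ne.symm hvy, hy⟩))
    (Nat.add_le_add_right ?_ 1))
  have hN := closedNbhd_subset_insert_closedNbhd_contractEdge (G := G) hxy.ne hvy
  by_cases hvx' : G'.Adj v x
  · have hxN : x ∉ W \ closedNbhd G' v := fun h =>
      (Finset.mem_sdiff.mp h).2 (mem_closedNbhd.mpr (Or.inr hvx'))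
    rw [thetaOn_contractEdge_of_notMem hxN, ← Finset.sdiff_insert]
    exact thetaOn_mono (Finset.sdiff_subset_sdiff le_rfl hN)
  -- `v` is adjacent to neither `x` nor `y` in `G`, so `N_G[v] ⊆ N_{G'}[v]`.
  have hN' : closedNbhd G v ⊆ closedNbhd G' v := fun a ha =>
    (Finset.mem_insert.mp (hN ha)).resolve_left fun hay => by
      subst hay
      rcases mem_closedNbhd.mp ha with rfl | hva
      · exact hvy rfl
      · exact hvx' ((contractEdge_adj_left_iff hxy.ne).mpr ⟨hvx, hvy, Or.inr hva⟩)
  have hxN : x ∈ W \ closedNbhd G' v := Finset.mem_sdiff.mpr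
    ⟨hx, fun h => (mem_closedNbhd.mp h).elim (fun h => hvx h.symm) hvx'⟩
  have hyN : y ∈ W \ closedNbhd G' v := Finset.mem_sdiff.mpr
    ⟨hy, fun h => (mem_closedNbhd.mp h).elim (fun h => hvy h.symm) not_contractEdge_adj_right⟩
  calc thetaOn G' (W \ closedNbhd G' v)
      ≤ thetaOn G (W \ closedNbhd G' v) := thetaOn_contractEdge_le hxy hxN hyN
    _ ≤ thetaOn G (W \ closedNbhd G v) := thetaOn_mono (Finset.sdiff_subset_sdiff le_rfl hN')
termination_by W.card
decreasing_by
  · exact Finset.card_erase_lt_of_mem hvW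
  · exact card_sdiff_closedNbhd_lt hvW

lemma thetaG_contractEdge_le (hxy : G.Adj x y) : thetaG (contractEdge G x y) ≤ thetaG G := by
  rw [thetaG, thetaG, indComplex_eq_indOn_univ, indComplex_eq_indOn_univ]
  exact thetaOn_contractEdge_le hxy (Finset.mem_univ x) (Finset.mem_univ y)

end Contraction

theorem theta_le_of_contractionMinor {V : Type*} [Fintype V] [DecidableEq V] (G H : SimpleGraph V)
    (h : Relation.ReflTransGen ContractionStep G H) :
    thetaG H ≤ thetaG G := by
  induction h with
  | refl => exact le_rfl
  | tail _ hstep ih =>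
    obtain ⟨x, y, hxy, rfl⟩ := hstep
    exact (thetaG_contractEdge_le hxy).trans ih

end ThetaPaper
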